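/- Let λ ≥ 1 and r > 0. Among all measurable densities ρ : ℝ^d → [0,1] with ∫ρ = λ·|B_r|, the characteristic function of the ball B_{λ^{1/d} r} (centered at the same center) is the unique minimizer of the squared 2-Wasserstein distance ρ ↦ W₂²(ρ, λ·1_{B_r}). -/

import Mathlib

/-!
Write `m σ = ‖id‖_{L²(σ)}` for the root second moment of a measure and `c = λ^{1/d}`.
Minkowski's inequality along any coupling gives `(m σ - m ν)² ≤ W₂²(σ, ν)`, and this bound is
attained by the dilation `y ↦ c • y`, which pushes `ν = λ·1_{B_r}` forward to `1_{B_{cr}}`.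
By the bathtub principle, among densities with values in `[0, 1]` and mass `|B_{cr}|` the
indicator of `B_{cr}` alone minimizes the second moment. Hence every competitor `ρ` satisfies
`W₂²(ρ, ν) ≥ (m ρ - m ν)² ≥ (m 1_{B_{cr}} - m ν)² = W₂²(1_{B_{cr}}, ν)`, and equality forces
`m ρ ≤ m 1_{B_{cr}}`, i.e. `ρ = 1_{B_{cr}}` almost everywhere.
-/

open MeasureTheory Metric

/-- Squared 2-Wasserstein distance between two measures on a normed space,
defined as the infimum over couplings of the integral of the squared distance. -/
noncomputable def W2sq {E : Type*} [NormedAddCommGroup E] [MeasurableSpace E]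
    (μ ν : Measure E) : ENNReal :=
  ⨅ (π : Measure (E × E)) (_ : π.map Prod.fst = μ) (_ : π.map Prod.snd = ν),
    ∫⁻ p, ENNReal.ofReal (‖p.1 - p.2‖ ^ 2) ∂π

open ENNReal Module

lemma eLpNorm_two_sq {α F : Type*} [MeasurableSpace α] [NormedAddCommGroup F]
    (f : α → F) (μ : Measure α) : eLpNorm f 2 μ ^ 2 = ∫⁻ x, ‖f x‖ₑ ^ 2 ∂μ := by
  simpa using eLpNorm_nnreal_pow_eq_lintegral (f := f) (μ := μ) (p := 2) two_ne_zero

lemma lintegral_ofReal_eq_of_integral_eq {α : Type*} [MeasurableSpace α] {μ : Measure α}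
    {f : α → ℝ} {a : ℝ≥0∞} (hf : ∀ x, 0 ≤ f x) (ha₀ : a ≠ 0) (ha : a ≠ ⊤)
    (h : ∫ x, f x ∂μ = a.toReal) : ∫⁻ x, ENNReal.ofReal (f x) ∂μ = a := by
  have hint : Integrable f μ := by
    by_contra hnot
    rw [integral_undef hnot] at h
    exact (toReal_pos ha₀ ha).ne h
  rw [← ofReal_integral_eq_lintegral_ofReal hint (ae_of_all _ hf), h, ofReal_toReal ha]

section Coupling

variable {E : Type*} [NormedAddCommGroup E] [MeasurableSpace E]

lemma lintegral_ofReal_norm_sub_sq (π : Measure (E × E)) :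
    ∫⁻ p, ENNReal.ofReal (‖p.1 - p.2‖ ^ 2) ∂π = eLpNorm (fun p => p.1 - p.2) 2 π ^ 2 := by
  rw [eLpNorm_two_sq]
  congr with p
  rw [ofReal_pow (norm_nonneg _), ofReal_norm]

lemma W2sq_le_eLpNorm_sq {μ ν : Measure E} (π : Measure (E × E)) (h₁ : π.map Prod.fst = μ)
    (h₂ : π.map Prod.snd = ν) : W2sq μ ν ≤ eLpNorm (fun p => p.1 - p.2) 2 π ^ 2 :=
  iInf_le_of_le π <| iInf_le_of_le h₁ <| iInf_le_of_le h₂ (lintegral_ofReal_norm_sub_sq π).le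

lemma W2sq_map_le (ν : Measure E) {f : E → E} (hf : Measurable f) :
    W2sq (ν.map f) ν ≤ eLpNorm (f - id) 2 ν ^ 2 := by
  have hg : Measurable fun y => (f y, y) := hf.prodMk measurable_id
  refine (W2sq_le_eLpNorm_sq (ν.map fun y => (f y, y)) ?_ ?_).trans ?_
  · rw [Measure.map_map measurable_fst hg]; rfl
  · rw [Measure.map_map measurable_snd hg]; exact Measure.map_id
  · rw [eLpNorm_two_sq, eLpNorm_two_sq]
    exact lintegral_map_le _ _

variable [OpensMeasurableSpace E] [SecondCountableTopology E]

lemma eLpNorm_id_sub_sq_le_W2sq (μ ν : Measure E) :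
    (eLpNorm id 2 μ - eLpNorm id 2 ν) ^ 2 ≤ W2sq μ ν := by
  refine le_iInf fun π => le_iInf fun h₁ => le_iInf fun h₂ => ?_
  have hmink : eLpNorm id 2 μ ≤ eLpNorm (fun p : E × E => p.1 - p.2) 2 π + eLpNorm id 2 ν := by
    subst h₁ h₂
    rw [eLpNorm_map_measure aestronglyMeasurable_id measurable_fst.aemeasurable,
      eLpNorm_map_measure aestronglyMeasurable_id measurable_snd.aemeasurable]
    refine le_of_eq_of_le ?_ (eLpNorm_add_le ?_ ?_ one_le_two)
    · congr 1; funext p; simp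
    · exact (continuous_fst.sub continuous_snd).aestronglyMeasurable
    · exact measurable_snd.aestronglyMeasurable
  rw [lintegral_ofReal_norm_sub_sq]
  gcongr
  exact tsub_le_iff_right.2 hmink

end Coupling

section Dilation

variable {E : Type*} [NormedAddCommGroup E] [NormedSpace ℝ E] [MeasurableSpace E]
  [BorelSpace E] [SecondCountableTopology E]

lemma eLpNorm_id_map_smul (ν : Measure E) (c : ℝ) (p : ℝ≥0∞) :
    eLpNorm id p (ν.map (c • ·)) = ‖c‖ₑ * eLpNorm id p ν := by
  rw [eLpNorm_map_measure aestronglyMeasurable_id (measurable_const_smul c).aemeasurable,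
    ← eLpNorm_const_smul]
  rfl

lemma W2sq_map_smul (ν : Measure E) {c : ℝ} (hc : 1 ≤ c) (hν : eLpNorm id 2 ν ≠ ⊤) :
    W2sq (ν.map (c • ·)) ν = (eLpNorm id 2 (ν.map (c • ·)) - eLpNorm id 2 ν) ^ 2 := by
  refine le_antisymm ((W2sq_map_le ν (measurable_const_smul c)).trans_eq ?_)
    (eLpNorm_id_sub_sq_le_W2sq _ _)
  have hsub : (c • · : E → E) - id = (c - 1) • id := by
    funext x; simp [sub_smul]
  rw [hsub, eLpNorm_const_smul, eLpNorm_id_map_smul, Real.enorm_of_nonneg (sub_nonneg.2 hc),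
    Real.enorm_of_nonneg (by linarith), ofReal_sub _ zero_le_one, ofReal_one,
    ENNReal.sub_mul fun _ _ => hν, one_mul]

lemma eLpNorm_id_le_map_smul (ν : Measure E) {c : ℝ} (hc : 1 ≤ c) (p : ℝ≥0∞) :
    eLpNorm id p ν ≤ eLpNorm id p (ν.map (c • ·)) := by
  rw [eLpNorm_id_map_smul, Real.enorm_of_nonneg (by linarith)]
  exact le_mul_of_one_le_left' (one_le_ofReal.2 hc)

lemma W2sq_map_smul_le (ν σ : Measure E) {c : ℝ} (hc : 1 ≤ c) (hν : eLpNorm id 2 ν ≠ ⊤)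
    (hσ : eLpNorm id 2 (ν.map (c • ·)) ≤ eLpNorm id 2 σ) :
    W2sq (ν.map (c • ·)) ν ≤ W2sq σ ν := by
  rw [W2sq_map_smul ν hc hν]
  exact le_trans (by gcongr) (eLpNorm_id_sub_sq_le_W2sq σ ν)

lemma eLpNorm_id_le_of_W2sq_map_smul_eq (ν σ : Measure E) {c : ℝ} (hc : 1 ≤ c)
    (hν : eLpNorm id 2 ν ≠ ⊤) (h : W2sq (ν.map (c • ·)) ν = W2sq σ ν) :
    eLpNorm id 2 σ ≤ eLpNorm id 2 (ν.map (c • ·)) := by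
  have hle := (eLpNorm_id_sub_sq_le_W2sq σ ν).trans_eq (h.symm.trans (W2sq_map_smul ν hc hν))
  rwa [ENNReal.pow_le_pow_left_iff two_ne_zero,
    tsub_le_tsub_iff_right (eLpNorm_id_le_map_smul ν hc 2)] at hle

end Dilation

lemma map_smul_smul_restrict_closedBall {E : Type*} [NormedAddCommGroup E] [NormedSpace ℝ E]
    [FiniteDimensional ℝ E] [MeasurableSpace E] [BorelSpace E] (μ : Measure E)
    [μ.IsAddHaarMeasure] {c : ℝ} (hc : 0 < c) (r : ℝ) :
    (ENNReal.ofReal (c ^ finrank ℝ E) • μ.restrict (closedBall 0 r)).map (c • ·) =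
      μ.restrict (closedBall 0 (c * r)) := by
  have hpre : (c • · : E → E) ⁻¹' closedBall 0 (c * r) = closedBall 0 r := by
    ext x
    simp only [Set.mem_preimage, mem_closedBall_zero_iff, norm_smul, Real.norm_of_nonneg hc.le]
    exact mul_le_mul_iff_right₀ hc
  rw [Measure.map_smul, ← hpre,
    ← Measure.restrict_map (measurable_const_smul c) measurableSet_closedBall,
    Measure.map_addHaar_smul μ hc.ne', Measure.restrict_smul, smul_smul,
    abs_of_pos (inv_pos.2 (pow_pos hc _)), ← ofReal_mul (by positivity),
    mul_inv_cancel₀ (pow_pos hc _).ne', ofReal_one, one_smul]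

section Bathtub

variable {E : Type*} [NormedAddCommGroup E]

lemma sq_sub_sq_mul_sub_indicator_closedBall_nonneg {R a : ℝ} (hR : 0 ≤ R)
    (ha : a ∈ Set.Icc (0 : ℝ) 1) (x : E) :
    0 ≤ (‖x‖ ^ 2 - R ^ 2) * (a - (closedBall 0 R).indicator 1 x) := by
  by_cases hx : x ∈ closedBall 0 R
  · have : ‖x‖ ^ 2 ≤ R ^ 2 := pow_le_pow_left₀ (norm_nonneg x) (mem_closedBall_zero_iff.1 hx) 2
    simp only [Set.indicator_of_mem hx, Pi.one_apply]
    exact mul_nonneg_of_nonpos_of_nonpos (by linarith) (by linarith [ha.2])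
  · have : R ^ 2 ≤ ‖x‖ ^ 2 :=
      pow_le_pow_left₀ hR (not_le.1 (mt mem_closedBall_zero_iff.2 hx)).le 2
    simp only [Set.indicator_of_notMem hx, sub_zero]
    exact mul_nonneg (by linarith) ha.1

lemma eq_indicator_closedBall_of_sq_sub_sq_mul_sub_nonpos {R a : ℝ} (hR : 0 ≤ R)
    (ha : a ∈ Set.Icc (0 : ℝ) 1) {x : E} (hxR : ‖x‖ ≠ R)
    (h : (‖x‖ ^ 2 - R ^ 2) * (a - (closedBall 0 R).indicator 1 x) ≤ 0) :
    a = (closedBall 0 R).indicator 1 x := by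
  by_cases hx : x ∈ closedBall 0 R
  · have : ‖x‖ ^ 2 < R ^ 2 := pow_lt_pow_left₀
      (lt_of_le_of_ne (mem_closedBall_zero_iff.1 hx) hxR) (norm_nonneg x) two_ne_zero
    simp only [Set.indicator_of_mem hx, Pi.one_apply] at h ⊢
    nlinarith [ha.2]
  · have : R ^ 2 < ‖x‖ ^ 2 :=
      pow_lt_pow_left₀ (not_le.1 (mt mem_closedBall_zero_iff.2 hx)) hR two_ne_zero
    simp only [Set.indicator_of_notMem hx, sub_zero] at h ⊢
    nlinarith [ha.1]

variable [MeasurableSpace E] [OpensMeasurableSpace E] {μ : Measure E} {ρ : E → ℝ} {R : ℝ}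

lemma eLpNorm_id_restrict_closedBall_lt_top (hfin : μ (closedBall 0 R) ≠ ⊤) (p : ℝ≥0∞) :
    eLpNorm id p (μ.restrict (closedBall 0 R)) < ⊤ := by
  refine (eLpNorm_le_of_ae_bound (C := R) ?_).trans_lt (mul_lt_top ?_ ofReal_lt_top)
  · exact ae_restrict_of_forall_mem measurableSet_closedBall fun x hx =>
      mem_closedBall_zero_iff.1 hx
  · rw [Measure.restrict_apply_univ]
    exact rpow_lt_top_of_nonneg (by positivity) hfin

/-- The bathtub principle in the form of an identity. -/
lemma lintegral_ofReal_mul_enorm_sq_eq (hρ : Measurable ρ)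
    (h01 : ∀ x, ρ x ∈ Set.Icc (0 : ℝ) 1) (hR : 0 ≤ R)
    (hmass : ∫⁻ x, ENNReal.ofReal (ρ x) ∂μ = μ (closedBall 0 R))
    (hfin : μ (closedBall 0 R) ≠ ⊤) :
    ∫⁻ x, ENNReal.ofReal (ρ x) * ‖x‖ₑ ^ 2 ∂μ = ∫⁻ x in closedBall 0 R, ‖x‖ₑ ^ 2 ∂μ +
      ∫⁻ x, ENNReal.ofReal ((‖x‖ ^ 2 - R ^ 2) * (ρ x - (closedBall 0 R).indicator 1 x)) ∂μ := by
  set B : Set E := closedBall 0 R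
  set f : E → ℝ := fun x => (‖x‖ ^ 2 - R ^ 2) * (ρ x - B.indicator 1 x)
  have hB : MeasurableSet B := measurableSet_closedBall
  have hpt : ∀ x, ENNReal.ofReal (ρ x) * ‖x‖ₑ ^ 2 + ENNReal.ofReal (R ^ 2) * B.indicator 1 x =
      B.indicator (fun x => ‖x‖ₑ ^ 2) x +
        (ENNReal.ofReal (R ^ 2) * ENNReal.ofReal (ρ x) + ENNReal.ofReal (f x)) := by
    intro x
    have hf : 0 ≤ f x := sq_sub_sq_mul_sub_indicator_closedBall_nonneg hR (h01 x) x
    have h0 := (h01 x).1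
    by_cases hx : x ∈ B
    · simp only [f, Set.indicator_of_mem hx, Pi.one_apply, mul_one] at hf ⊢
      rw [← ofReal_norm, ← ofReal_pow (norm_nonneg x), ← ofReal_mul h0,
        ← ofReal_mul (sq_nonneg R), ← ofReal_add (by positivity) (by positivity),
        ← ofReal_add (by positivity) hf, ← ofReal_add (by positivity) (by positivity)]
      congr 1; ring
    · simp only [f, Set.indicator_of_notMem hx, mul_zero, add_zero, zero_add, sub_zero] at hf ⊢
      rw [← ofReal_norm, ← ofReal_pow (norm_nonneg x), ← ofReal_mul h0,
        ← ofReal_mul (sq_nonneg R), ← ofReal_add (by positivity) hf]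
      congr 1; ring
  have hsum := lintegral_congr (μ := μ) hpt
  have hχ : Measurable (B.indicator (1 : E → ℝ≥0∞)) := measurable_one.indicator hB
  rw [lintegral_add_right _ (hχ.const_mul _), lintegral_const_mul _ hχ,
    lintegral_indicator_one hB, lintegral_add_left ((measurable_enorm.pow_const 2).indicator hB),
    lintegral_add_left (hρ.ennreal_ofReal.const_mul _), lintegral_const_mul _ hρ.ennreal_ofReal,
    hmass, lintegral_indicator hB, ← add_assoc, add_right_comm _ (ENNReal.ofReal _ * _)] at hsum
  exact (ENNReal.add_left_inj (mul_ne_top ofReal_ne_top hfin)).1 hsum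

lemma eLpNorm_id_withDensity_sq (hρ : Measurable ρ) :
    eLpNorm id 2 (μ.withDensity fun x => ENNReal.ofReal (ρ x)) ^ 2 =
      ∫⁻ x, ENNReal.ofReal (ρ x) * ‖x‖ₑ ^ 2 ∂μ := by
  rw [eLpNorm_two_sq, lintegral_withDensity_eq_lintegral_mul _ hρ.ennreal_ofReal (by fun_prop)]
  rfl

lemma eLpNorm_id_restrict_closedBall_le (hρ : Measurable ρ)
    (h01 : ∀ x, ρ x ∈ Set.Icc (0 : ℝ) 1) (hR : 0 ≤ R)
    (hmass : ∫⁻ x, ENNReal.ofReal (ρ x) ∂μ = μ (closedBall 0 R))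
    (hfin : μ (closedBall 0 R) ≠ ⊤) :
    eLpNorm id 2 (μ.restrict (closedBall 0 R)) ≤
      eLpNorm id 2 (μ.withDensity fun x => ENNReal.ofReal (ρ x)) := by
  rw [← ENNReal.pow_le_pow_left_iff two_ne_zero, eLpNorm_id_withDensity_sq hρ,
    lintegral_ofReal_mul_enorm_sq_eq hρ h01 hR hmass hfin, eLpNorm_two_sq]
  exact le_self_add

lemma ae_eq_indicator_closedBall_of_eLpNorm_id_le [NormedSpace ℝ E] [FiniteDimensional ℝ E]
    [BorelSpace E] [μ.IsAddHaarMeasure] (hρ : Measurable ρ)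
    (h01 : ∀ x, ρ x ∈ Set.Icc (0 : ℝ) 1) (hR : 0 < R)
    (hmass : ∫⁻ x, ENNReal.ofReal (ρ x) ∂μ = μ (closedBall 0 R))
    (h : eLpNorm id 2 (μ.withDensity fun x => ENNReal.ofReal (ρ x)) ≤
      eLpNorm id 2 (μ.restrict (closedBall 0 R))) :
    ρ =ᵐ[μ] (closedBall 0 R).indicator 1 := by
  set B : Set E := closedBall 0 R
  have hfin : μ B ≠ ⊤ := measure_closedBall_lt_top.ne
  have hball : ∫⁻ x in B, ‖x‖ₑ ^ 2 ∂μ ≠ ⊤ := by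
    rw [← eLpNorm_two_sq]
    exact pow_ne_top (eLpNorm_id_restrict_closedBall_lt_top hfin 2).ne
  rw [← ENNReal.pow_le_pow_left_iff two_ne_zero, eLpNorm_id_withDensity_sq hρ,
    lintegral_ofReal_mul_enorm_sq_eq hρ h01 hR.le hmass hfin, eLpNorm_two_sq] at h
  have hdefect : ∫⁻ x, ENNReal.ofReal ((‖x‖ ^ 2 - R ^ 2) * (ρ x - B.indicator 1 x)) ∂μ = 0 :=
    le_zero_iff.1 ((ENNReal.add_le_add_iff_left hball).1 (h.trans_eq (add_zero _).symm))
  have hmeas : Measurable fun x : E => (‖x‖ ^ 2 - R ^ 2) * (ρ x - B.indicator 1 x) :=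
    ((measurable_norm.pow_const 2).sub_const _).mul
      (hρ.sub (measurable_one.indicator measurableSet_closedBall))
  have hsphere : ∀ᵐ x ∂μ, x ∉ sphere (0 : E) R :=
    measure_eq_zero_iff_ae_notMem.1 (Measure.addHaar_sphere_of_ne_zero μ 0 hR.ne')
  filter_upwards [(lintegral_eq_zero_iff hmeas.ennreal_ofReal).1 hdefect, hsphere]
    with x hx hxs
  exact eq_indicator_closedBall_of_sq_sub_sq_mul_sub_nonpos hR.le (h01 x)
    (by rwa [mem_sphere_zero_iff_norm] at hxs) (ofReal_eq_zero.1 hx)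

end Bathtub

/-- Among all densities `ρ : ℝ^d → [0,1]` with mass `λ |B_r|`, the indicator of
the ball `B_{λ^{1/d} r}` is the unique minimizer of `ρ ↦ W₂²(ρ, λ·1_{B_r})`. -/
theorem wasserstein_projection_of_ball (d : ℕ) (hd : 1 ≤ d) (lam r : ℝ)
    (hlam : 1 ≤ lam) (hr : 0 < r) :
    ∀ ρ : EuclideanSpace ℝ (Fin d) → ℝ, Measurable ρ →
      (∀ x, ρ x ∈ Set.Icc (0:ℝ) 1) →
      (∫ x, ρ x) = lam * (volume (closedBall (0 : EuclideanSpace ℝ (Fin d)) r)).toReal →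
      W2sq
        (volume.withDensity
          (Set.indicator (closedBall (0 : EuclideanSpace ℝ (Fin d)) (lam ^ ((1:ℝ)/d) * r))
            (fun _ => (1 : ENNReal))))
        (volume.withDensity
          (Set.indicator (closedBall (0 : EuclideanSpace ℝ (Fin d)) r)
            (fun _ => ENNReal.ofReal lam)))
      ≤ W2sq (volume.withDensity (fun x => ENNReal.ofReal (ρ x)))
          (volume.withDensity
            (Set.indicator (closedBall (0 : EuclideanSpace ℝ (Fin d)) r)
              (fun _ => ENNReal.ofReal lam))) ∧
      (W2sq
          (volume.withDensity
            (Set.indicator (closedBall (0 : EuclideanSpace ℝ (Fin d)) (lam ^ ((1:ℝ)/d) * r))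
              (fun _ => (1 : ENNReal))))
          (volume.withDensity
            (Set.indicator (closedBall (0 : EuclideanSpace ℝ (Fin d)) r)
              (fun _ => ENNReal.ofReal lam)))
        = W2sq (volume.withDensity (fun x => ENNReal.ofReal (ρ x)))
            (volume.withDensity
              (Set.indicator (closedBall (0 : EuclideanSpace ℝ (Fin d)) r)
                (fun _ => ENNReal.ofReal lam))) →
        ρ =ᵐ[volume]
          Set.indicator (closedBall (0 : EuclideanSpace ℝ (Fin d)) (lam ^ ((1:ℝ)/d) * r))
            (fun _ => (1 : ℝ))) := by
  intro ρ hρ h01 hmass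
  set c := lam ^ ((1 : ℝ) / d) with hc_def
  have hc : 1 ≤ c := Real.one_le_rpow hlam (by positivity)
  have hcd : c ^ finrank ℝ (EuclideanSpace ℝ (Fin d)) = lam := by
    rw [finrank_euclideanSpace_fin, hc_def, one_div,
      Real.rpow_inv_natCast_pow (by linarith) (by omega)]
  set B := closedBall (0 : EuclideanSpace ℝ (Fin d)) (c * r)
  set ν := ENNReal.ofReal lam • volume.restrict (closedBall (0 : EuclideanSpace ℝ (Fin d)) r)
  have hmap : ν.map (c • ·) = volume.restrict B := by
    rw [← map_smul_smul_restrict_closedBall volume (by positivity), hcd]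
  have hBfin : volume B ≠ ⊤ := measure_closedBall_lt_top.ne
  have hνfin : eLpNorm id 2 ν ≠ ⊤ := ne_top_of_le_ne_top
    (hmap ▸ eLpNorm_id_restrict_closedBall_lt_top hBfin 2).ne (eLpNorm_id_le_map_smul ν hc 2)
  have hmassB : ∫⁻ x, ENNReal.ofReal (ρ x) = volume B := by
    refine lintegral_ofReal_eq_of_integral_eq (fun x => (h01 x).1)
      (measure_closedBall_pos _ _ (by positivity)).ne' hBfin ?_
    rw [hmass, Measure.addHaar_closedBall_mul _ _ (by positivity) hr.le, hcd, toReal_mul,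
      toReal_ofReal (by linarith)]
  rw [withDensity_indicator measurableSet_closedBall, withDensity_const, one_smul,
    withDensity_indicator measurableSet_closedBall, withDensity_const, ← hmap]
  refine ⟨W2sq_map_smul_le ν _ hc hνfin ?_, fun heq => ?_⟩
  · exact hmap ▸ eLpNorm_id_restrict_closedBall_le hρ h01 (by positivity) hmassB hBfin
  · exact ae_eq_indicator_closedBall_of_eLpNorm_id_le hρ h01 (by positivity) hmassB
      (hmap ▸ eLpNorm_id_le_of_W2sq_map_smul_eq ν _ hc hνfin heq)
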